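/- arXiv:2211.16012 — 3 statements merged into one kernel-verified Lean document; each statement's English description precedes it below -/
import Mathlib

section
/- If a word w is square-free (contains no nonempty factor of the form uu) and every factor of w of length > 1 occurs exactly once in w, then for any substitution φ from variables to words such that φ(w') is a factor of w for some word w' in which a variable c occurs at least twice, φ(c) is either the empty word or a single variable (a word of length ≤ 1). -/
/-- If a word `w` is square-free and every factor of `w` of length `> 1` occurs
exactly once in `w`, then for any substitution `φ` (extended to words via `List.flatMap`)
such that `φ(w')` is a factor of `w` for some word `w'` in which a variable `c` occurs at
least twice, the word `φ(c)` has length at most `1`. -/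
theorem sub_of_multiple_var_short {X : Type*} [DecidableEq X] (w : List X)
    (hsf : ∀ u : List X, u ≠ [] → ¬ (u ++ u) <:+: w)
    (huniq : ∀ u a b a' b' : List X, 1 < u.length →
      w = a ++ u ++ b → w = a' ++ u ++ b' → a = a')
    (φ : X → List X) (w' : List X) (c : X)
    (hc : 2 ≤ w'.count c)
    (hfac : (w'.flatMap φ) <:+: w) :
    (φ c).length ≤ 1 := by
  -- decompose w' as x ++ c :: (y ++ c :: z)
  have hdecomp : ∃ x y z : List X, w' = x ++ c :: (y ++ c :: z) := by
    have hmem : c ∈ w' := by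
      rw [← List.count_pos_iff]; omega
    obtain ⟨s, t, rfl⟩ := List.append_of_mem hmem
    rw [List.count_append, List.count_cons_self] at hc
    by_cases h : c ∈ t
    · obtain ⟨y, z, rfl⟩ := List.append_of_mem h
      exact ⟨s, y, z, rfl⟩
    · have ht0 : t.count c = 0 := List.count_eq_zero_of_not_mem h
      have hs : c ∈ s := by rw [← List.count_pos_iff]; omega
      obtain ⟨x, v, rfl⟩ := List.append_of_mem hs
      exact ⟨x, v, t, by simp⟩
  obtain ⟨x, y, z, rfl⟩ := hdecomp
  by_contra h
  push_neg at h
  obtain ⟨p, q, hw⟩ := hfac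
  have h1 : w = (p ++ x.flatMap φ) ++ φ c ++ (y.flatMap φ ++ φ c ++ z.flatMap φ ++ q) := by
    rw [← hw]; simp
  have h2 : w = (p ++ x.flatMap φ ++ φ c ++ y.flatMap φ) ++ φ c ++ (z.flatMap φ ++ q) := by
    rw [← hw]; simp
  have := huniq (φ c) _ _ _ _ h h1 h2
  have hlen := congrArg List.length this
  simp [List.length_append] at hlen
  rw [hlen.1] at h; simp at h
end

section
/- The word xyzxy (in three distinct variables x, y, z) is an isoterm for the 6-element Brandt monoid B_2^1: if an identity xyzxy ≈ v (where v is a word over {x, y, z}) holds under all substitutions of elements of B_2^1, then v = xyzxy. -/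
/-!
Substituting `E 0 1` for a letter `c` and `1` for all others sends a word to `E 0 1 ^ (count c)`,
and `E 0 1 ^ n = E 0 1` only for `n = 1`; so an identity of `B21` preserves the letters occurring
exactly once. If moreover `z` is such a letter, substituting `E 1 0` for `z` sends `s ++ z :: t` to
`E 0 1 ^ m * E 1 0 * E 0 1 ^ n`, which equals `E 0 1` only for `m = n = 1`. With `x, y, z` the
letters `0, 1, 2`, this forces `v = p ++ z :: q` with `p, q ∈ {xy, yx}`. Finally `x ↦ E 0 0`,
`y ↦ E 0 1`, `z ↦ E 1 0` sends `xyzxy` to `E 0 1` but kills every word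
containing the factor `yx`.
-/

/-- The 6-element Brandt monoid `B₂¹` realized as a set of `2×2` matrices over `ℚ`. -/
def B21 : Set (Matrix (Fin 2) (Fin 2) ℚ) :=
  {0, Matrix.single 0 0 1, Matrix.single 0 1 1,
   Matrix.single 1 0 1, Matrix.single 1 1 1, 1}

section Words

variable {α : Type*} [DecidableEq α]

theorem List.exists_eq_append_cons_of_count_eq_one {a : α} {l : List α} (h : l.count a = 1) :
    ∃ s t, l = s ++ a :: t ∧ a ∉ s ∧ a ∉ t := by
  obtain ⟨s, t, rfl⟩ := List.append_of_mem (List.count_pos_iff.mp (h ▸ Nat.one_pos))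
  rw [List.count_append, List.count_cons_self] at h
  exact ⟨s, t, rfl, List.count_eq_zero.mp (by omega), List.count_eq_zero.mp (by omega)⟩

theorem List.eq_pair_or_eq_pair_of_count_eq_one {a b : α} (hab : a ≠ b) {l : List α}
    (ha : l.count a = 1) (hb : l.count b = 1) (hl : ∀ x ∈ l, x = a ∨ x = b) :
    l = [a, b] ∨ l = [b, a] := by
  refine List.perm_pair.mp (List.perm_iff_count.mpr fun x => ?_)
  by_cases hxa : x = a
  · subst hxa; simp [ha, hab]
  by_cases hxb : x = b
  · subst hxb; simp [hb, hab]
  rw [List.count_eq_zero.mpr fun hx => (hl x hx).elim hxa hxb]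
  simp [Ne.symm hxa, Ne.symm hxb]

variable {M : Type*} [Monoid M]

theorem List.prod_map_ite_eq_pow (l : List α) (c : α) (A : M) :
    (l.map fun a => if a = c then A else 1).prod = A ^ l.count c := by
  rw [List.prod_map_eq_pow_single c _ fun a h _ => if_neg h, if_pos rfl]

theorem List.prod_map_ite_append_cons {c z : α} (hcz : c ≠ z) (A B : M) {s t : List α}
    (hs : z ∉ s) (ht : z ∉ t) :
    ((s ++ z :: t).map fun a => if a = c then A else if a = z then B else 1).prod =
      A ^ s.count c * B * A ^ t.count c := by
  have hcongr : ∀ u : List α, z ∉ u →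
      (u.map fun a => if a = c then A else if a = z then B else 1) =
        u.map fun a => if a = c then A else 1 :=
    fun u hu => List.map_congr_left fun a ha => by rw [if_neg (ne_of_mem_of_not_mem ha hu)]
  rw [List.map_append, List.map_cons, hcongr s hs, hcongr t ht, List.prod_append,
    List.prod_cons, List.prod_map_ite_eq_pow, List.prod_map_ite_eq_pow, if_neg hcz.symm,
    if_pos rfl, mul_assoc]

def IdentityHolds (S : Set M) (u v : List α) : Prop :=
  ∀ φ : α → M, (∀ i, φ i ∈ S) → (u.map φ).prod = (v.map φ).prod

end Words

namespace B21

abbrev E (i j : Fin 2) : Matrix (Fin 2) (Fin 2) ℚ := Matrix.single i j 1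

theorem E_mem (i j : Fin 2) : E i j ∈ B21 := by
  fin_cases i <;> fin_cases j <;> simp [B21]

theorem one_mem : (1 : Matrix (Fin 2) (Fin 2) ℚ) ∈ B21 := by simp [B21]

theorem E_ne_zero (i j : Fin 2) : E i j ≠ 0 :=
  fun h => one_ne_zero (α := ℚ) (by simpa using congrFun (congrFun h i) j)

theorem E_eq_E_iff {i j k l : Fin 2} : E i j = E k l ↔ i = k ∧ j = l :=
  ⟨fun h => by simpa [Matrix.single_apply] using congrFun (congrFun h k) l,
    by rintro ⟨rfl, rfl⟩; rfl⟩

theorem E01_pow_add_two (n : ℕ) : E 0 1 ^ (n + 2) = 0 := by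
  simp [pow_add, sq]

theorem E01_pow_eq_E01_iff {n : ℕ} : E 0 1 ^ n = E 0 1 ↔ n = 1 := by
  rcases n with _ | _ | n
  · decide
  · simp
  · simp [E01_pow_add_two, (E_ne_zero 0 1).symm]

theorem E01_pow_mul_E10_mul_E01_pow_eq_E01_iff {m n : ℕ} :
    E 0 1 ^ m * E 1 0 * E 0 1 ^ n = E 0 1 ↔ m = 1 ∧ n = 1 := by
  rcases m with _ | _ | m <;> rcases n with _ | _ | n <;>
    simp [E01_pow_add_two, E_eq_E_iff, (E_ne_zero 0 1).symm]

variable {α : Type*} [DecidableEq α]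

theorem count_eq_one_iff_of_identityHolds {u v : List α} (h : IdentityHolds B21 u v) (c : α) :
    u.count c = 1 ↔ v.count c = 1 := by
  have hc := h (fun a => if a = c then E 0 1 else 1) fun a => by
    split_ifs <;> simp [E_mem, one_mem]
  rw [List.prod_map_ite_eq_pow, List.prod_map_ite_eq_pow] at hc
  rw [← E01_pow_eq_E01_iff, hc, E01_pow_eq_E01_iff]

theorem count_eq_one_on_both_sides_iff_of_identityHolds {c z : α} (hcz : c ≠ z)
    {s t s' t' : List α} (hs : z ∉ s) (ht : z ∉ t) (hs' : z ∉ s') (ht' : z ∉ t')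
    (h : IdentityHolds B21 (s ++ z :: t) (s' ++ z :: t')) :
    s.count c = 1 ∧ t.count c = 1 ↔ s'.count c = 1 ∧ t'.count c = 1 := by
  have hc := h (fun a => if a = c then E 0 1 else if a = z then E 1 0 else 1) fun a => by
    split_ifs <;> simp [E_mem, one_mem]
  rw [List.prod_map_ite_append_cons hcz _ _ hs ht,
    List.prod_map_ite_append_cons hcz _ _ hs' ht'] at hc
  rw [← E01_pow_mul_E10_mul_E01_pow_eq_E01_iff, hc, E01_pow_mul_E10_mul_E01_pow_eq_E01_iff]

end B21

open B21 in
/-- The word `xyzxy` (with `x := 0`, `y := 1`, `z := 2`) is an isoterm for the Brandt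
monoid `B₂¹`: any word `v` over `{x, y, z}` such that `xyzxy ≈ v` holds under every
substitution of elements of `B₂¹` must equal `xyzxy`. -/
theorem xyzxy_isoterm_for_B21 :
    ∀ v : List (Fin 3),
      (∀ φ : Fin 3 → Matrix (Fin 2) (Fin 2) ℚ, (∀ i, φ i ∈ B21) →
        (([0, 1, 2, 0, 1] : List (Fin 3)).map φ).prod = (v.map φ).prod) →
      v = [0, 1, 2, 0, 1] := by
  intro v H
  have hz : v.count 2 = 1 := (count_eq_one_iff_of_identityHolds H 2).mp (by decide)
  obtain ⟨p, q, rfl, hp, hq⟩ := List.exists_eq_append_cons_of_count_eq_one hz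
  have hcount (c : Fin 3) (hc : c ≠ 2) : p.count c = 1 ∧ q.count c = 1 :=
    (count_eq_one_on_both_sides_iff_of_identityHolds (s := [0, 1]) (t := [0, 1]) hc (by decide)
      (by decide) hp hq H).mp (by decide +revert)
  have hxy (l : List (Fin 3)) (hl : 2 ∉ l) : l.count 0 = 1 → l.count 1 = 1 →
      l = [0, 1] ∨ l = [1, 0] := fun h0 h1 =>
    List.eq_pair_or_eq_pair_of_count_eq_one (by decide) h0 h1 fun x hx => by
      fin_cases x <;> simp_all
  have h := H ![E 0 0, E 0 1, E 1 0] fun a => by fin_cases a <;> simp [E_mem]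
  rcases hxy p hp (hcount 0 (by decide)).1 (hcount 1 (by decide)).1 with rfl | rfl <;>
    rcases hxy q hq (hcount 0 (by decide)).2 (hcount 1 (by decide)).2 with rfl | rfl <;>
    simp [E_ne_zero] at h ⊢
end

section
/- Let A_2^1 be the 6-element monoid obtained by adjoining an identity to the semigroup ⟨a, b | aba = a, bab = b, a² = 0, b² = b⟩. Then every identity satisfied by A_2^1 is satisfied by B_2^1; that is, the variety generated by B_2^1 is contained in the variety generated by A_2^1. Concretely, B_2^1 is isomorphic to a subquotient (divisor) of a finite direct power of A_2^1; it suffices to exhibit B_2^1 as a homomorphic image of a submonoid of A_2^1 × A_2^1. -/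
/-- The 6-element monoid `A₂¹` realized as a set of `2×2` matrices over `ℚ`:
with `a := E₁₂` and `b := !![0,0; 1,1]` one has `aba = a`, `bab = b`, `a² = 0`, `b² = b`;
the elements are `0`, `a`, `b`, `ab`, `ba` and the identity. -/
def A21 : Set (Matrix (Fin 2) (Fin 2) ℚ) :=
  {0, !![(0:ℚ), 1; 0, 0], !![(0:ℚ), 0; 1, 1], !![(1:ℚ), 1; 0, 0], !![(0:ℚ), 0; 0, 1], 1}

open Matrix
open scoped Kronecker

/-!
Write `a = !![0,1;0,0]` and `b = !![0,0;1,1]` for the generators of `A₂¹`; the Kronecker product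
makes `A₂¹ × A₂¹` a monoid of `4 × 4` matrices. The rows of `b21Compression` are `bᵀ` and `b`,
flattened, and right multiplication by `ab ⊗ ba`, `a ⊗ b`, `b ⊗ a`, `ba ⊗ ab` maps their span to
itself, acting there as the matrix units `E₁₁, E₁₂, E₂₁, E₂₂` of `B₂¹`. Hence every product in
`B₂¹` is `b21Compression * (X ⊗ₖ Y) * b21Lift` for two products `X`, `Y` in `A₂¹` of the same
word, and an identity of `A₂¹` applied to both factors gives it in `B₂¹`.
-/

section Intertwining

variable {ι m n R : Type*} [Fintype m] [Fintype n] [DecidableEq m] [DecidableEq n]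

theorem Matrix.list_prod_kronecker_list_prod [CommSemiring R] (w : List ι)
    (f : ι → Matrix m m R) (g : ι → Matrix n n R) :
    (w.map f).prod ⊗ₖ (w.map g).prod = (w.map fun i => f i ⊗ₖ g i).prod := by
  induction w with
  | nil => exact one_kronecker_one
  | cons i w ih => simp only [List.map_cons, List.prod_cons, mul_kronecker_mul, ih]

theorem Matrix.mul_list_prod_eq_list_prod_mul [Semiring R] {P : Matrix m n R}
    {S : ι → Matrix n n R} {X : ι → Matrix m m R} (h : ∀ i, P * S i = X i * P) (w : List ι) :
    P * (w.map S).prod = (w.map X).prod * P := by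
  induction w with
  | nil => simp
  | cons i w ih =>
    rw [List.map_cons, List.map_cons, List.prod_cons, List.prod_cons, ← Matrix.mul_assoc, h,
      Matrix.mul_assoc, ih, Matrix.mul_assoc]

end Intertwining

def b21Compression : Matrix (Fin 2) (Fin 2 × Fin 2) ℚ :=
  of fun r ik => ![!![0, 1; 0, 1], !![0, 0; 1, 1]] r ik.1 ik.2

def b21Lift : Matrix (Fin 2 × Fin 2) (Fin 2) ℚ :=
  of fun jl s => if jl = (s, 1 - s) then 1 else 0

theorem b21Compression_mul_b21Lift : b21Compression * b21Lift = 1 := by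
  ext r s
  fin_cases r <;> fin_cases s <;> simp [b21Compression, b21Lift, mul_apply]

theorem b21Compression_mul_kronecker :
    b21Compression * (!![(1 : ℚ), 1; 0, 0] ⊗ₖ !![0, 0; 0, 1]) =
      (single 0 0 1 : Matrix (Fin 2) (Fin 2) ℚ) * b21Compression ∧
    b21Compression * (!![(0 : ℚ), 1; 0, 0] ⊗ₖ !![0, 0; 1, 1]) =
      (single 0 1 1 : Matrix (Fin 2) (Fin 2) ℚ) * b21Compression ∧
    b21Compression * (!![(0 : ℚ), 0; 1, 1] ⊗ₖ !![0, 1; 0, 0]) =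
      (single 1 0 1 : Matrix (Fin 2) (Fin 2) ℚ) * b21Compression ∧
    b21Compression * (!![(0 : ℚ), 0; 0, 1] ⊗ₖ !![1, 1; 0, 0]) =
      (single 1 1 1 : Matrix (Fin 2) (Fin 2) ℚ) * b21Compression := by
  refine ⟨?_, ?_, ?_, ?_⟩ <;> ext r ⟨i, k⟩ <;> fin_cases r <;> fin_cases i <;> fin_cases k <;>
    simp [b21Compression, mul_apply, Fintype.sum_prod_type, single_apply]

theorem exists_A21_b21Compression_mul_kronecker (x : Matrix (Fin 2) (Fin 2) ℚ) (hx : x ∈ B21) :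
    ∃ y ∈ A21, ∃ z ∈ A21, b21Compression * (y ⊗ₖ z) = x * b21Compression := by
  simp only [B21, Set.mem_insert_iff, Set.mem_singleton_iff] at hx
  obtain ⟨h₁₁, h₁₂, h₂₁, h₂₂⟩ := b21Compression_mul_kronecker
  rcases hx with rfl | rfl | rfl | rfl | rfl | rfl
  · exact ⟨0, by simp [A21], 0, by simp [A21], by simp⟩
  · exact ⟨!![1, 1; 0, 0], by simp [A21], !![0, 0; 0, 1], by simp [A21], h₁₁⟩
  · exact ⟨!![0, 1; 0, 0], by simp [A21], !![0, 0; 1, 1], by simp [A21], h₁₂⟩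
  · exact ⟨!![0, 0; 1, 1], by simp [A21], !![0, 1; 0, 0], by simp [A21], h₂₁⟩
  · exact ⟨!![0, 0; 0, 1], by simp [A21], !![1, 1; 0, 0], by simp [A21], h₂₂⟩
  · exact ⟨1, by simp [A21], 1, by simp [A21], by simp⟩

/-- Every identity satisfied by `A₂¹` is satisfied by `B₂¹`: the variety generated by
`B₂¹` is contained in the variety generated by `A₂¹`. -/
theorem B21_variety_le_A21_variety :
    ∀ u v : List ℕ,
      (∀ φ : ℕ → Matrix (Fin 2) (Fin 2) ℚ, (∀ i, φ i ∈ A21) →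
        (u.map φ).prod = (v.map φ).prod) →
      (∀ ψ : ℕ → Matrix (Fin 2) (Fin 2) ℚ, (∀ i, ψ i ∈ B21) →
        (u.map ψ).prod = (v.map ψ).prod) := by
  intro u v hA ψ hψ
  choose y hy z hz hyz using fun i => exists_A21_b21Compression_mul_kronecker (ψ i) (hψ i)
  have compress (w : List ℕ) : (w.map ψ).prod =
      b21Compression * ((w.map y).prod ⊗ₖ (w.map z).prod) * b21Lift := by
    rw [list_prod_kronecker_list_prod, mul_list_prod_eq_list_prod_mul hyz, Matrix.mul_assoc,
      b21Compression_mul_b21Lift, Matrix.mul_one]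
  rw [compress u, compress v, hA y hy, hA z hz]
end
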